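/- arXiv:1310.4643 — 2 statements merged into one kernel-verified Lean document; each statement's English description precedes it below -/
import Mathlib

section
/- Let (X,d) be a metric space equipped with a Borel measure μ, let m ≥ 1 be an integer, and fix x ∈ X. Assume that the function s ↦ μ(B_s(x))/(ω_m s^m) is nondecreasing on (0,∞) and converges, as s → ∞, to a limit E ∈ (0,∞). For t > 0 set R_t := 2·((m/2)·Γ(m/2))^{1/m}·t^{1/2}. Then limsup_{t→∞} ∫_{X∖B_{R_t}(x)} (2πt)^{-m/2}·exp(-d(x,y)²/(2t)) dμ(y) ≤ E·C_m. -/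
open MeasureTheory Real Filter Set

/-- Upper incomplete Gamma function `Γ(a,x) = ∫ₓ^∞ u^(a-1) e^(-u) du`. -/
noncomputable def incGamma (a x : ℝ) : ℝ := ∫ u in Set.Ioi x, u ^ (a - 1) * Real.exp (-u)

/-- Volume `ω_m` of the unit ball in `ℝ^m`. -/
noncomputable def omegaBall (m : ℕ) : ℝ := Real.pi ^ ((m : ℝ) / 2) / Real.Gamma ((m : ℝ) / 2 + 1)

/-- The constant `C_m = Γ(m/2, 2 ((m/2) Γ(m/2))^(2/m)) / Γ(m/2)`. -/
noncomputable def Cm (m : ℕ) : ℝ :=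
  incGamma ((m : ℝ) / 2) (2 * (((m : ℝ) / 2) * Real.Gamma ((m : ℝ) / 2)) ^ (2 / (m : ℝ))) /
    Real.Gamma ((m : ℝ) / 2)

/-! Put `ρ(y) = d(x,y)²/(2t)` and `R² = 2ta`. Writing `e^{-ρ} = ∫_ρ^∞ e^{-u} du` and applying
Tonelli turns the Gaussian integral over `X ∖ B_R(x)` into `∫_a^∞ μ(B_{√(2tu)} ∖ B_R) e^{-u} du`.
Monotonicity makes the volume ratio at most `E` at every radius, and for large `R` it is at least
`E - ε` at radius `R`, so the annulus has measure at most
`ω_m (E (2tu)^{m/2} - (E - ε)(2ta)^{m/2})`. What remains is an incomplete Gamma integral, equal to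
`E Γ(m/2, a)/Γ(m/2) + ε a^{m/2} e^{-a}/Γ(m/2 + 1)`; it does not depend on `t`, because `R_t` is
chosen so that `a = 2((m/2)Γ(m/2))^{2/m}`, the second argument of `Γ` in `C_m`. -/

lemma integrableOn_rpow_mul_exp_neg_Ioi {p x : ℝ} (hp : -1 < p) (hx : 0 ≤ x) :
    IntegrableOn (fun u : ℝ => u ^ p * exp (-u)) (Ioi x) :=
  ((GammaIntegral_convergent (s := p + 1) (by linarith)).mono_set (Ioi_subset_Ioi hx)).congr_fun
    (fun u _ => by simp [mul_comm]) measurableSet_Ioi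

lemma integrableOn_mul_rpow_sub_mul_exp_neg_Ioi {p a : ℝ} (hp : -1 < p) (ha : 0 ≤ a)
    (A B : ℝ) : IntegrableOn (fun u : ℝ => (A * u ^ p - B) * exp (-u)) (Ioi a) := by
  refine (((integrableOn_rpow_mul_exp_neg_Ioi hp ha).const_mul A).sub
    ((integrableOn_exp_neg_Ioi a).const_mul B)).congr (Eventually.of_forall fun u => ?_)
  simp only [Pi.sub_apply]
  ring

lemma incGamma_add_one {p x : ℝ} (hp : 0 < p) (hx : 0 < x) :
    incGamma (p + 1) x = p * incGamma p x + x ^ p * exp (-x) := by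
  have hint := integrableOn_rpow_mul_exp_neg_Ioi (by linarith) hx.le (p := p)
  have hint' := (integrableOn_rpow_mul_exp_neg_Ioi (by linarith) hx.le (p := p - 1)).const_mul p
  have hderiv : ∀ u ∈ Ici x, HasDerivAt (fun u : ℝ => -(u ^ p * exp (-u)))
      (u ^ p * exp (-u) - p * (u ^ (p - 1) * exp (-u))) u := by
    intro u hu
    have h : HasDerivAt (fun u : ℝ => -(u ^ p * exp (-u)))
        (-(p * u ^ (p - 1) * exp (-u) + u ^ p * (exp (-u) * -1))) u :=
      ((hasDerivAt_rpow_const (Or.inl (hx.trans_le hu).ne')).mul (hasDerivAt_neg u).exp).neg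
    convert h using 1
    ring
  have hlim : Tendsto (fun u : ℝ => -(u ^ p * exp (-u))) atTop (nhds 0) := by
    simpa using (tendsto_rpow_mul_exp_neg_mul_atTop_nhds_zero p 1 one_pos).neg
  have key := integral_Ioi_of_hasDerivAt_of_tendsto' hderiv (hint.sub hint') hlim
  rw [integral_sub hint hint', integral_const_mul] at key
  simp only [incGamma, add_sub_cancel_right]
  linarith

lemma integral_Ioi_mul_rpow_sub_mul_exp_neg {p a : ℝ} (hp : 0 < p) (ha : 0 < a) (A B : ℝ) :
    ∫ u in Ioi a, (A * u ^ p - B) * exp (-u) =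
      A * (p * incGamma p a + a ^ p * exp (-a)) - B * exp (-a) := by
  have hA := (integrableOn_rpow_mul_exp_neg_Ioi (by linarith) ha.le (p := p)).const_mul A
  have hB := (integrableOn_exp_neg_Ioi a).const_mul B
  simp_rw [sub_mul, mul_assoc]
  rw [integral_sub hA hB, integral_const_mul, integral_const_mul, integral_exp_neg_Ioi,
    ← incGamma_add_one hp ha, incGamma, add_sub_cancel_right]

lemma omegaBall_pos (m : ℕ) : 0 < omegaBall m := by
  unfold omegaBall
  have : 0 < Gamma ((m : ℝ) / 2 + 1) := Gamma_pos_of_pos (by positivity)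
  positivity

lemma gaussian_mul_omegaBall {t : ℝ} (ht : 0 < t) (m : ℕ) :
    (2 * π * t) ^ (-(m : ℝ) / 2) * (omegaBall m * (2 * t) ^ ((m : ℝ) / 2)) =
      (Gamma ((m : ℝ) / 2 + 1))⁻¹ := by
  rw [omegaBall, show 2 * π * t = π * (2 * t) by ring, mul_rpow pi_pos.le (by positivity),
    neg_div, rpow_neg pi_pos.le, rpow_neg (by positivity : (0 : ℝ) ≤ 2 * t)]
  have : π ^ ((m : ℝ) / 2) * (2 * t) ^ ((m : ℝ) / 2) ≠ 0 := by positivity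
  field_simp

lemma gaussian_mul_integral_Ioi_eq {m : ℕ} (hm : 0 < m) {t a : ℝ} (ht : 0 < t) (ha : 0 < a)
    (E E' : ℝ) :
    (2 * π * t) ^ (-(m : ℝ) / 2) * ∫ u in Ioi a,
        (E * (omegaBall m * (2 * t) ^ ((m : ℝ) / 2)) * u ^ ((m : ℝ) / 2) -
          E' * (omegaBall m * (2 * t * a) ^ ((m : ℝ) / 2))) * exp (-u) =
      E * (incGamma ((m : ℝ) / 2) a / Gamma ((m : ℝ) / 2)) +
        (E - E') * (a ^ ((m : ℝ) / 2) * exp (-a) / Gamma ((m : ℝ) / 2 + 1)) := by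
  set p : ℝ := (m : ℝ) / 2
  have hp : 0 < p := by positivity
  have hΓ := Gamma_pos_of_pos hp
  rw [integral_Ioi_mul_rpow_sub_mul_exp_neg hp ha, mul_rpow (by positivity) ha.le]
  calc _ = (2 * π * t) ^ (-(m : ℝ) / 2) * (omegaBall m * (2 * t) ^ p) *
        (E * (p * incGamma p a) + (E - E') * (a ^ p * exp (-a))) := by ring
    _ = _ := by
      rw [gaussian_mul_omegaBall ht, Gamma_add_one hp.ne']
      field_simp

lemma ofReal_exp_neg_eq_lintegral_Ioi (r : ℝ) :
    ENNReal.ofReal (exp (-r)) = ∫⁻ u in Ioi r, ENNReal.ofReal (exp (-u)) := by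
  rw [← integral_exp_neg_Ioi r, ofReal_integral_eq_lintegral_ofReal (integrableOn_exp_neg_Ioi r)
    (Eventually.of_forall fun u => (exp_pos _).le)]

section Tonelli

variable {X : Type*} [MeasurableSpace X] (μ : Measure X) [SFinite μ] {ρ : X → ℝ} {S : Set X}
  {a : ℝ}

lemma setLIntegral_exp_neg_eq_lintegral_measure (hρ : Measurable ρ) (hS : MeasurableSet S)
    (ha : ∀ y ∈ S, a ≤ ρ y) :
    ∫⁻ y in S, ENNReal.ofReal (exp (-ρ y)) ∂μ =
      ∫⁻ u in Ioi a, μ (S ∩ {y | ρ y < u}) * ENNReal.ofReal (exp (-u)) := by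
  have hsplit : ∀ y ∈ S, ENNReal.ofReal (exp (-ρ y)) =
      ∫⁻ u in Ioi a, (Ioi (ρ y)).indicator (fun u => ENNReal.ofReal (exp (-u))) u := by
    intro y hy
    rw [lintegral_indicator measurableSet_Ioi, Measure.restrict_restrict measurableSet_Ioi,
      inter_eq_left.2 (Ioi_subset_Ioi (ha y hy)), ofReal_exp_neg_eq_lintegral_Ioi]
  have hswap : ∀ y u, (Ioi (ρ y)).indicator (fun u => ENNReal.ofReal (exp (-u))) u =
      {y | ρ y < u}.indicator (fun _ => ENNReal.ofReal (exp (-u))) y := fun y u => by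
    simp [indicator_apply]
  simp_rw [setLIntegral_congr_fun hS hsplit, hswap]
  rw [lintegral_lintegral_swap]
  · refine setLIntegral_congr_fun measurableSet_Ioi fun u _ => ?_
    rw [lintegral_indicator_const (measurableSet_lt hρ measurable_const),
      Measure.restrict_apply' hS, mul_comm, inter_comm]
  · exact (Measurable.indicator (by fun_prop)
      (measurableSet_lt (hρ.comp measurable_fst) measurable_snd)).aemeasurable

lemma setIntegral_exp_neg_le_of_measure_le (hρ : Measurable ρ) (hS : MeasurableSet S)
    (ha : ∀ y ∈ S, a ≤ ρ y) {g : ℝ → ℝ} (hg : ∀ u ∈ Ioi a, 0 ≤ g u)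
    (hgi : IntegrableOn (fun u => g u * exp (-u)) (Ioi a))
    (hμ : ∀ u ∈ Ioi a, μ (S ∩ {y | ρ y < u}) ≤ ENNReal.ofReal (g u)) :
    ∫ y in S, exp (-ρ y) ∂μ ≤ ∫ u in Ioi a, g u * exp (-u) := by
  have hg' : ∀ u ∈ Ioi a, 0 ≤ g u * exp (-u) := fun u hu => mul_nonneg (hg u hu) (exp_pos _).le
  rw [integral_eq_lintegral_of_nonneg_ae (Eventually.of_forall fun y => (exp_pos _).le)
    (by fun_prop)]
  refine ENNReal.toReal_le_of_le_ofReal (setIntegral_nonneg measurableSet_Ioi hg') ?_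
  rw [setLIntegral_exp_neg_eq_lintegral_measure μ hρ hS ha,
    ofReal_integral_eq_lintegral_ofReal hgi
      ((ae_restrict_iff' measurableSet_Ioi).2 (Eventually.of_forall hg'))]
  refine setLIntegral_mono' measurableSet_Ioi fun u hu => ?_
  rw [ENNReal.ofReal_mul (hg u hu)]
  gcongr
  exact hμ u hu

end Tonelli

lemma sqrt_pow_eq_rpow {y : ℝ} (hy : 0 ≤ y) (m : ℕ) : √y ^ m = y ^ ((m : ℝ) / 2) := by
  rw [rpow_div_two_eq_sqrt _ hy, rpow_natCast]

lemma compl_ball_inter_setOf_lt_subset {X : Type*} [MetricSpace X] {x : X} {t u R : ℝ}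
    (ht : 0 < t) :
    (Metric.ball x R)ᶜ ∩ {y | dist x y ^ 2 / (2 * t) < u} ⊆
      Metric.ball x √(2 * t * u) \ Metric.ball x R := by
  rintro y ⟨hyR, hyu⟩
  refine ⟨?_, hyR⟩
  rw [Metric.mem_ball, dist_comm, lt_sqrt dist_nonneg, ← div_lt_iff₀' (by positivity)]
  exact hyu

section Ball

variable {X : Type*} [MetricSpace X] [MeasurableSpace X] {μ : Measure X} {x : X}

lemma sigmaFinite_of_measure_ball_lt_top (h : ∀ r, μ (Metric.ball x r) < ⊤) : SigmaFinite μ :=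
  Measure.sigmaFinite_of_countable (countable_range fun n : ℕ => Metric.ball x n)
    (forall_mem_range.2 fun n => h n) (by rw [sUnion_range, Metric.iUnion_ball_nat])

lemma measure_ball_diff_ball_le [OpensMeasurableSpace X] {R r a b : ℝ} (hRr : R ≤ r)
    (hr : μ (Metric.ball x r) ≤ ENNReal.ofReal a)
    (hR : ENNReal.ofReal b ≤ μ (Metric.ball x R)) :
    μ (Metric.ball x r \ Metric.ball x R) ≤ ENNReal.ofReal (a - b) := by
  have hsub := Metric.ball_subset_ball (x := x) hRr
  have hfin : μ (Metric.ball x R) ≠ ⊤ :=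
    ((measure_mono hsub).trans hr).trans_lt ENNReal.ofReal_lt_top |>.ne
  rw [measure_sdiff hsub measurableSet_ball.nullMeasurableSet hfin, tsub_le_iff_right]
  calc μ (Metric.ball x r) ≤ ENNReal.ofReal (a - b + b) := by rwa [sub_add_cancel]
    _ ≤ ENNReal.ofReal (a - b) + ENNReal.ofReal b := ENNReal.ofReal_add_le
    _ ≤ ENNReal.ofReal (a - b) + μ (Metric.ball x R) := by gcongr

theorem setIntegral_compl_ball_gaussian_le [OpensMeasurableSpace X] {m : ℕ} (hm : 0 < m)
    {E E' t a R : ℝ} (hE : 0 ≤ E) (hE' : E' ≤ E) (ht : 0 < t) (ha : 0 < a) (hR : 0 ≤ R)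
    (hRa : R ^ 2 = 2 * t * a)
    (hupper : ∀ r, R < r → μ (Metric.ball x r) ≤ ENNReal.ofReal (E * (omegaBall m * r ^ m)))
    (hlower : ENNReal.ofReal (E' * (omegaBall m * R ^ m)) ≤ μ (Metric.ball x R)) :
    ∫ y in (Metric.ball x R)ᶜ, (2 * π * t) ^ (-(m : ℝ) / 2) * exp (-dist x y ^ 2 / (2 * t)) ∂μ ≤
      E * (incGamma ((m : ℝ) / 2) a / Gamma ((m : ℝ) / 2)) +
        (E - E') * (a ^ ((m : ℝ) / 2) * exp (-a) / Gamma ((m : ℝ) / 2 + 1)) := by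
  set p : ℝ := (m : ℝ) / 2
  have hω := omegaBall_pos m
  have : SigmaFinite μ := sigmaFinite_of_measure_ball_lt_top (x := x) fun r =>
    (measure_mono (Metric.ball_subset_ball (le_max_left r (R + 1)))).trans_lt
      ((hupper _ ((lt_add_one R).trans_le (le_max_right _ _))).trans_lt ENNReal.ofReal_lt_top)
  set A := E * (omegaBall m * (2 * t) ^ p)
  set B := E' * (omegaBall m * (2 * t * a) ^ p)
  have hRm : R ^ m = (2 * t * a) ^ p := by
    rw [← sqrt_sq hR, hRa, sqrt_pow_eq_rpow (by positivity)]
  have hg : ∀ u ∈ Ioi a, 0 ≤ A * u ^ p - B := fun u hu => by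
    have hu : a ≤ u := (mem_Ioi.1 hu).le
    have h : omegaBall m * (2 * t * a) ^ p ≤ omegaBall m * (2 * t) ^ p * u ^ p := by
      rw [mul_assoc (omegaBall m), mul_rpow (by positivity) ha.le]
      gcongr
    rw [sub_nonneg, mul_assoc]
    exact mul_le_mul hE' h (by positivity) hE
  have hmeas : ∀ u ∈ Ioi a, μ ((Metric.ball x R)ᶜ ∩ {y | dist x y ^ 2 / (2 * t) < u}) ≤
      ENNReal.ofReal (A * u ^ p - B) := by
    intro u hu
    have hu0 : 0 ≤ u := ha.le.trans (mem_Ioi.1 hu).le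
    have hRr : R < √(2 * t * u) := (lt_sqrt hR).2 (by rw [hRa]; gcongr; exact hu)
    refine (measure_mono (compl_ball_inter_setOf_lt_subset ht)).trans
      (measure_ball_diff_ball_le hRr.le (hupper _ hRr) (hRm ▸ hlower)) |>.trans_eq ?_
    rw [sqrt_pow_eq_rpow (by positivity), mul_rpow (by positivity) hu0]
    simp only [A, B, p, mul_assoc]
  rw [integral_const_mul, ← gaussian_mul_integral_Ioi_eq hm ht ha]
  gcongr
  simp only [neg_div]
  refine setIntegral_exp_neg_le_of_measure_le μ (by fun_prop) measurableSet_ball.compl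
    (fun y hy => ?_) hg
    (integrableOn_mul_rpow_sub_mul_exp_neg_Ioi (neg_one_lt_zero.trans_le (by positivity)) ha.le A B)
    hmeas
  rw [le_div_iff₀ (by positivity), mul_comm, ← hRa]
  gcongr
  simpa [dist_comm] using hy

variable {w : ℝ → ℝ} {E : ℝ}

lemma measure_ball_ne_top_of_tendsto (hE : E ≠ 0)
    (hlim : Tendsto (fun s => (μ (Metric.ball x s)).toReal / w s) atTop (nhds E)) (s : ℝ) :
    μ (Metric.ball x s) ≠ ⊤ := by
  intro htop
  have hzero : ∀ᶠ r in atTop, (μ (Metric.ball x r)).toReal / w r = 0 :=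
    (eventually_ge_atTop s).mono fun r hr => by
      rw [top_unique (htop.symm.le.trans (measure_mono (Metric.ball_subset_ball hr))),
        ENNReal.toReal_top, zero_div]
  exact hE (tendsto_nhds_unique hlim (tendsto_const_nhds.congr' (hzero.mono fun _ h => h.symm)))

lemma measure_ball_le_ofReal_of_tendsto (hE : 0 < E)
    (hmono : ∀ s₁ s₂ : ℝ, 0 < s₁ → s₁ ≤ s₂ →
      (μ (Metric.ball x s₁)).toReal / w s₁ ≤ (μ (Metric.ball x s₂)).toReal / w s₂)
    (hlim : Tendsto (fun s => (μ (Metric.ball x s)).toReal / w s) atTop (nhds E))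
    {r : ℝ} (hr : 0 < r) (hw : 0 < w r) :
    μ (Metric.ball x r) ≤ ENNReal.ofReal (E * w r) := by
  rw [ENNReal.le_ofReal_iff_toReal_le (measure_ball_ne_top_of_tendsto hE.ne' hlim r)
    (by positivity), ← div_le_iff₀ hw]
  exact ge_of_tendsto hlim ((eventually_ge_atTop r).mono fun s hs => hmono r s hr hs)

lemma eventually_ofReal_le_measure_ball (hE : E ≠ 0)
    (hlim : Tendsto (fun s => (μ (Metric.ball x s)).toReal / w s) atTop (nhds E))
    (hw : ∀ᶠ s in atTop, 0 < w s) {E' : ℝ} (hE' : E' < E) :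
    ∀ᶠ s in atTop, ENNReal.ofReal (E' * w s) ≤ μ (Metric.ball x s) := by
  filter_upwards [hlim.eventually (eventually_gt_nhds hE'), hw] with s hs hws
  rw [ENNReal.ofReal_le_iff_le_toReal (measure_ball_ne_top_of_tendsto hE hlim s),
    ← le_div_iff₀ hws]
  exact hs.le

end Ball

lemma limsup_le_of_forall_eventually_le_add {α : Type*} {l : Filter α} {f : α → ℝ} {b : ℝ}
    (hf : l.IsCoboundedUnder (· ≤ ·) f) (h : ∀ ε > 0, ∀ᶠ t in l, f t ≤ b + ε) :
    limsup f l ≤ b := by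
  refine (limsup_le_iff' hf (isBoundedUnder_of_eventually_le (h 1 one_pos))).2 fun z hz => ?_
  simpa using h (z - b) (sub_pos.2 hz)

lemma sq_two_mul_rpow_mul_rpow_half {b t : ℝ} (hb : 0 ≤ b) (ht : 0 ≤ t) {m : ℝ} :
    (2 * b ^ (1 / m) * t ^ ((1 : ℝ) / 2)) ^ 2 = 2 * t * (2 * b ^ (2 / m)) := by
  have hb2 : (b ^ (1 / m)) ^ 2 = b ^ (2 / m) := by rw [← rpow_mul_natCast hb]; ring_nf
  have ht2 : (t ^ ((1 : ℝ) / 2)) ^ 2 = t := by rw [← sqrt_eq_rpow, sq_sqrt ht]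
  rw [mul_pow, mul_pow, hb2, ht2]
  ring

theorem tail_integral_limsup {X : Type*} [MetricSpace X] [MeasurableSpace X] [BorelSpace X]
    (μ : Measure X) (m : ℕ) (hm : 1 ≤ m) (x : X) (E : ℝ) (hE : 0 < E)
    (Qmono : ∀ s₁ s₂ : ℝ, 0 < s₁ → s₁ ≤ s₂ →
      (μ (Metric.ball x s₁)).toReal / (omegaBall m * s₁ ^ m) ≤
        (μ (Metric.ball x s₂)).toReal / (omegaBall m * s₂ ^ m))
    (Qlim : Tendsto (fun s : ℝ => (μ (Metric.ball x s)).toReal / (omegaBall m * s ^ m))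
      atTop (nhds E)) :
    limsup (fun t : ℝ =>
        ∫ y in (Metric.ball x
            (2 * (((m : ℝ) / 2) * Real.Gamma ((m : ℝ) / 2)) ^ (1 / (m : ℝ)) *
              t ^ ((1 : ℝ) / 2)))ᶜ,
          (2 * π * t) ^ (-(m : ℝ) / 2) * Real.exp (-(dist x y) ^ 2 / (2 * t)) ∂μ)
      atTop ≤ E * Cm m := by
  have hω := omegaBall_pos m
  set b := (m : ℝ) / 2 * Gamma ((m : ℝ) / 2)
  have hb : 0 < b := mul_pos (by positivity) (Gamma_pos_of_pos (by positivity))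
  set a := 2 * b ^ (2 / (m : ℝ))
  set K := a ^ ((m : ℝ) / 2) * exp (-a) / Gamma ((m : ℝ) / 2 + 1)
  have hK : 0 < K := by have := Gamma_pos_of_pos (by positivity : (0 : ℝ) < m / 2 + 1); positivity
  have hR : Tendsto (fun t : ℝ => 2 * b ^ (1 / (m : ℝ)) * t ^ ((1 : ℝ) / 2)) atTop atTop :=
    (tendsto_rpow_atTop (by norm_num)).const_mul_atTop (by positivity)
  refine limsup_le_of_forall_eventually_le_add (isCoboundedUnder_le_of_eventually_le _
    ((eventually_gt_atTop 0).mono fun t ht => integral_nonneg fun y => by positivity))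
    fun ε hε => ?_
  have hlower := eventually_ofReal_le_measure_ball hE.ne' Qlim
    ((eventually_gt_atTop 0).mono fun s hs => by positivity) (sub_lt_self E (div_pos hε hK))
  filter_upwards [hR.eventually hlower, eventually_gt_atTop 0] with t hlow ht
  have hR0 : 0 < 2 * b ^ (1 / (m : ℝ)) * t ^ ((1 : ℝ) / 2) := by positivity
  have := setIntegral_compl_ball_gaussian_le (by omega) hE.le (sub_le_self E (div_pos hε hK).le)
    ht (by positivity) hR0.le (sq_two_mul_rpow_mul_rpow_half hb.le ht.le)
    (fun r hr => measure_ball_le_ofReal_of_tendsto hE Qmono Qlim (hR0.trans hr)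
      (mul_pos hω (pow_pos (hR0.trans hr) m)))
    hlow
  rwa [sub_sub_cancel, div_mul_cancel₀ _ hK.ne'] at this
end

section
/- Let (X,d) be a metric space equipped with a Borel measure μ, let m ≥ 1 be an integer, let C > 0, and fix x ∈ X. Assume μ(B_s(x)) ≤ C·s^m for every s > 0. Then for every t > 0 and every R ≥ 0, ∫_{{y ∈ X : d(x,y) ≥ R}} exp(-d(x,y)²/(2t)) dμ(y) ≤ C·(2t)^{m/2}·Γ(m/2 + 1, R²/(2t)), where Γ(a,x) := ∫_x^∞ u^{a-1} e^{-u} du is the upper incomplete Gamma function. -/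
open MeasureTheory Real Filter Set

/-! Since `exp (-v) = ∫_{u > v} exp (-u) du`, Tonelli gives
`∫ exp (-g) dμ = ∫ exp (-u) μ {g < u} du` for any measurable `g`. With
`g = d(x, ·)² / (2t)` on `{d(x, ·) ≥ R}`, the level set `{g < u}` lies in the ball of radius
`√(2tu)`, of measure at most `C (2t)^(m/2) u^(m/2)`, and it is empty for `u ≤ R² / (2t)`;
what remains is the incomplete Gamma integral. -/

theorem sigmaFinite_of_measure_ball_lt_top_s2 {X : Type*} [PseudoMetricSpace X]
    [MeasurableSpace X] {μ : Measure X} (x : X)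
    (h : ∀ s : ℝ, 0 < s → μ (Metric.ball x s) < ⊤) : SigmaFinite μ :=
  ⟨⟨⟨fun n => Metric.ball x (n + 1), fun _ => trivial, fun n => h _ n.cast_add_one_pos,
    Metric.iUnion_ball_nat_succ x⟩⟩⟩

theorem ofReal_exp_neg_eq_setLIntegral_Ioi (v : ℝ) :
    ENNReal.ofReal (exp (-v)) = ∫⁻ u in Ioi v, ENNReal.ofReal (exp (-u)) := by
  rw [← ofReal_integral_eq_lintegral_ofReal _ (ae_of_all _ fun u => (exp_pos _).le),
    integral_exp_neg_Ioi]
  simpa [IntegrableOn] using exp_neg_integrableOn_Ioi v one_pos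

theorem lintegral_ofReal_exp_neg_eq {X : Type*} [MeasurableSpace X] (μ : Measure X) [SFinite μ]
    {g : X → ℝ} (hg : Measurable g) :
    ∫⁻ y, ENNReal.ofReal (exp (-g y)) ∂μ =
      ∫⁻ u, ENNReal.ofReal (exp (-u)) * μ {y | g y < u} := by
  set F : X → ℝ → ENNReal := fun y u =>
    {p : X × ℝ | g p.1 < p.2}.indicator (fun p => ENNReal.ofReal (exp (-p.2))) (y, u)
  have hF : Measurable (Function.uncurry F) :=
    (ENNReal.measurable_ofReal.comp (measurable_exp.comp measurable_snd.neg)).indicator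
      (measurableSet_lt (hg.comp measurable_fst) measurable_snd)
  calc ∫⁻ y, ENNReal.ofReal (exp (-g y)) ∂μ = ∫⁻ y, (∫⁻ u, F y u) ∂μ := by
        refine lintegral_congr fun y => ?_
        rw [ofReal_exp_neg_eq_setLIntegral_Ioi, ← lintegral_indicator measurableSet_Ioi]
        rfl
    _ = ∫⁻ u, ∫⁻ y, F y u ∂μ := lintegral_lintegral_swap hF.aemeasurable
    _ = ∫⁻ u, ENNReal.ofReal (exp (-u)) * μ {y | g y < u} := by
        refine lintegral_congr fun u => ?_
        rw [← lintegral_indicator_const (measurableSet_lt hg measurable_const)]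
        rfl

theorem lintegral_ofReal_exp_neg_eq_setLIntegral_Ioi {X : Type*} [MeasurableSpace X]
    (μ : Measure X) [SFinite μ] {g : X → ℝ} (hg : Measurable g) {v : ℝ}
    (hv : ∀ᵐ y ∂μ, v ≤ g y) :
    ∫⁻ y, ENNReal.ofReal (exp (-g y)) ∂μ =
      ∫⁻ u in Ioi v, ENNReal.ofReal (exp (-u)) * μ {y | g y < u} := by
  rw [lintegral_ofReal_exp_neg_eq μ hg, setLIntegral_eq_of_support_subset]
  intro u hu
  by_contra hvu
  refine hu (mul_eq_zero_of_right _ (measure_mono_null (fun y hy => ?_) (ae_iff.mp hv)))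
  exact fun hvy => hvu (hvy.trans_lt hy)

theorem measure_sq_dist_div_lt_le {X : Type*} [PseudoMetricSpace X] [MeasurableSpace X]
    {μ : Measure X} {x : X} {m : ℕ} {C : ℝ}
    (hvol : ∀ s : ℝ, 0 < s → μ (Metric.ball x s) ≤ ENNReal.ofReal (C * s ^ m))
    {t u : ℝ} (ht : 0 < t) (hu : 0 < u) :
    μ {y | dist x y ^ 2 / (2 * t) < u} ≤
      ENNReal.ofReal (C * (2 * t) ^ ((m : ℝ) / 2) * u ^ ((m : ℝ) / 2)) := by
  have hball : {y | dist x y ^ 2 / (2 * t) < u} ⊆ Metric.ball x √(2 * t * u) := fun y hy => by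
    rw [Metric.mem_ball, dist_comm, lt_sqrt dist_nonneg, ← div_lt_iff₀' (by positivity)]
    exact hy
  calc μ {y | dist x y ^ 2 / (2 * t) < u} ≤ ENNReal.ofReal (C * √(2 * t * u) ^ m) :=
        (measure_mono hball).trans (hvol _ (by positivity))
    _ = ENNReal.ofReal (C * (2 * t) ^ ((m : ℝ) / 2) * u ^ ((m : ℝ) / 2)) := by
        rw [← rpow_natCast, ← rpow_div_two_eq_sqrt _ (by positivity),
          mul_rpow (by positivity) hu.le, mul_assoc]

theorem incGamma_nonneg (a : ℝ) {v : ℝ} (hv : 0 ≤ v) : 0 ≤ incGamma a v :=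
  setIntegral_nonneg measurableSet_Ioi fun _ hu =>
    mul_nonneg (rpow_nonneg (hv.trans (le_of_lt hu)) _) (exp_pos _).le

theorem ofReal_incGamma {a v : ℝ} (ha : 0 < a) (hv : 0 ≤ v) :
    ENNReal.ofReal (incGamma a v) = ∫⁻ u in Ioi v, ENNReal.ofReal (u ^ (a - 1) * exp (-u)) := by
  refine ofReal_integral_eq_lintegral_ofReal ?_ ((ae_restrict_iff' measurableSet_Ioi).mpr
    (ae_of_all _ fun u hu => mul_nonneg (rpow_nonneg (hv.trans (le_of_lt hu)) _) (exp_pos _).le))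
  simpa only [IntegrableOn, mul_comm] using
    (GammaIntegral_convergent ha).mono_set (Ioi_subset_Ioi hv)

theorem lintegral_ofReal_exp_neg_le_ofReal_mul_incGamma {X : Type*} [MeasurableSpace X]
    (μ : Measure X) [SFinite μ] {g : X → ℝ} (hg : Measurable g) {v : ℝ} (hv : 0 ≤ v)
    (hgv : ∀ᵐ y ∂μ, v ≤ g y) {a K : ℝ} (ha : 0 < a) (hK : 0 ≤ K)
    (hlevel : ∀ u, v < u → μ {y | g y < u} ≤ ENNReal.ofReal (K * u ^ (a - 1))) :
    ∫⁻ y, ENNReal.ofReal (exp (-g y)) ∂μ ≤ ENNReal.ofReal (K * incGamma a v) :=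
  calc ∫⁻ y, ENNReal.ofReal (exp (-g y)) ∂μ
      = ∫⁻ u in Ioi v, ENNReal.ofReal (exp (-u)) * μ {y | g y < u} :=
        lintegral_ofReal_exp_neg_eq_setLIntegral_Ioi μ hg hgv
    _ ≤ ∫⁻ u in Ioi v, ENNReal.ofReal K * ENNReal.ofReal (u ^ (a - 1) * exp (-u)) := by
        refine setLIntegral_mono' measurableSet_Ioi fun u hu => ?_
        calc _ ≤ ENNReal.ofReal (exp (-u)) * ENNReal.ofReal (K * u ^ (a - 1)) := by
              gcongr
              exact hlevel u hu
          _ = _ := by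
              rw [← ENNReal.ofReal_mul (exp_pos _).le, ← ENNReal.ofReal_mul hK]
              ring_nf
    _ = ENNReal.ofReal (K * incGamma a v) := by
        rw [lintegral_const_mul' _ _ ENNReal.ofReal_ne_top, ← ofReal_incGamma ha hv,
          ENNReal.ofReal_mul hK]

theorem gaussian_tail_estimate_general {X : Type*} [MetricSpace X] [MeasurableSpace X] [BorelSpace X]
    (μ : Measure X) (m : ℕ) (C : ℝ) (hC : 0 < C) (x : X)
    (hvol : ∀ s : ℝ, 0 < s → μ (Metric.ball x s) ≤ ENNReal.ofReal (C * s ^ m)) :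
    ∀ t : ℝ, 0 < t → ∀ R : ℝ, 0 ≤ R →
      ∫ y in {y : X | R ≤ dist x y}, Real.exp (-(dist x y) ^ 2 / (2 * t)) ∂μ ≤
        C * (2 * t) ^ ((m : ℝ) / 2) * incGamma ((m : ℝ) / 2 + 1) (R ^ 2 / (2 * t)) := by
  intro t ht R hR
  have := sigmaFinite_of_measure_ball_lt_top_s2 x fun s hs =>
    (hvol s hs).trans_lt ENNReal.ofReal_lt_top
  have hv : 0 ≤ R ^ 2 / (2 * t) := by positivity
  have hK : 0 ≤ C * (2 * t) ^ ((m : ℝ) / 2) := by positivity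
  have hdist : Measurable (dist x) := (continuous_const.dist continuous_id).measurable
  have hgv :
      ∀ᵐ y ∂μ.restrict {y | R ≤ dist x y}, R ^ 2 / (2 * t) ≤ dist x y ^ 2 / (2 * t) :=
    ae_restrict_of_forall_mem (measurableSet_le measurable_const hdist) fun y hy =>
      div_le_div_of_nonneg_right (pow_le_pow_left₀ hR hy 2) (by positivity)
  rw [integral_eq_lintegral_of_nonneg_ae (ae_of_all _ fun _ => (exp_pos _).le)
    (by fun_prop : Continuous _).aestronglyMeasurable]
  refine ENNReal.toReal_le_of_le_ofReal (mul_nonneg hK (incGamma_nonneg _ hv)) ?_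
  simp_rw [neg_div]
  refine lintegral_ofReal_exp_neg_le_ofReal_mul_incGamma _ ((hdist.pow_const 2).div_const _) hv
    hgv (by positivity) hK fun u hu => ?_
  rw [add_sub_cancel_right]
  exact (Measure.restrict_apply_le _ _).trans
    (measure_sq_dist_div_lt_le hvol ht (hv.trans_lt hu))

theorem gaussian_tail_estimate {X : Type*} [MetricSpace X] [MeasurableSpace X] [BorelSpace X]
    (μ : Measure X) (m : ℕ) (hm : 1 ≤ m) (C : ℝ) (hC : 0 < C) (x : X)
    (hvol : ∀ s : ℝ, 0 < s → μ (Metric.ball x s) ≤ ENNReal.ofReal (C * s ^ m)) :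
    ∀ t : ℝ, 0 < t → ∀ R : ℝ, 0 ≤ R →
      ∫ y in {y : X | R ≤ dist x y}, Real.exp (-(dist x y) ^ 2 / (2 * t)) ∂μ ≤
        C * (2 * t) ^ ((m : ℝ) / 2) * incGamma ((m : ℝ) / 2 + 1) (R ^ 2 / (2 * t)) :=
  gaussian_tail_estimate_general μ m C hC x hvol
end
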